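/- arXiv:2603.22741 — 4 statements merged into one kernel-verified Lean document; each statement's English description precedes it below -/
import Mathlib

section
/- Let b, c ≥ 0 and let y : [0, h] → ℝ≥0 be continuous and satisfy y(t) - y(0) ≤ b·t + c·∫₀ᵗ (t - s)·y(s) ds for all t ∈ [0, h]. Then y(t) ≤ (y(0) + b·t)·exp(√c · t) for all t ∈ [0, h]. -/
/-!
For `a > y 0` the function `F t = (a + b t) exp (r t)`, `r = √c`, is a strict supersolution:
since `r² ∫₀ᵗ (t - s) exp (r s) ds = exp (r t) - 1 - r t`, at the first time `t` at which `y`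
could reach `F` the integral inequality gives `y t ≤ F t - (a - y 0) - (a + b t) r t < F t`.
Letting `a` decrease to `y 0` gives the bound.
-/

open Real Set MeasureTheory intervalIntegral

theorem forall_Icc_lt_of_forall_Ico_lt_imp {α β : Type*} [ConditionallyCompleteLinearOrder α]
    [TopologicalSpace α] [OrderTopology α] [LinearOrder β] [TopologicalSpace β]
    [OrderClosedTopology β] {f g : α → β} {a b : α}
    (hf : ContinuousOn f (Icc a b)) (hg : ContinuousOn g (Icc a b)) (ha : f a < g a)
    (hstep : ∀ t ∈ Ioc a b, (∀ s ∈ Ico a t, f s < g s) → f t < g t) :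
    ∀ t ∈ Icc a b, f t < g t := by
  by_contra! hbad
  set S := {t ∈ Icc a b | g t ≤ f t}
  have hS : IsClosed S := isClosed_Icc.isClosed_le hg hf
  have hSbdd : BddBelow S := ⟨a, fun t ht => ht.1.1⟩
  obtain ⟨t₀, ht₀S⟩ : S.Nonempty := hbad
  have hfirst : sInf S ∈ S := hS.csInf_mem ⟨t₀, ht₀S⟩ hSbdd
  have hpos : a < sInf S := hfirst.1.1.lt_of_ne fun h => (hfirst.2.trans_lt (h ▸ ha)).false
  have hbefore : ∀ s ∈ Ico a (sInf S), f s < g s := fun s hs =>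
    not_le.1 fun hgf => notMem_of_lt_csInf hs.2 hSbdd ⟨⟨hs.1, hs.2.le.trans hfirst.1.2⟩, hgf⟩
  exact (hstep _ ⟨hpos, hfirst.1.2⟩ hbefore).not_ge hfirst.2

theorem sq_mul_integral_sub_mul_exp_mul (r t : ℝ) :
    r ^ 2 * ∫ s in (0 : ℝ)..t, (t - s) * exp (r * s) = exp (r * t) - 1 - r * t := by
  have hderiv : ∀ s ∈ uIcc 0 t, HasDerivAt (fun s => (r * (t - s) + 1) * exp (r * s))
      (r ^ 2 * ((t - s) * exp (r * s))) s := fun s _ => by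
    have := ((((hasDerivAt_id' s).const_sub t).const_mul r).add_const 1).mul
      ((hasDerivAt_id' s).const_mul r).exp
    exact this.congr_deriv (by ring)
  rw [← intervalIntegral.integral_const_mul, integral_eq_sub_of_hasDerivAt hderiv
    (Continuous.intervalIntegrable (by fun_prop) _ _)]
  simp only [sub_zero, mul_zero, exp_zero, mul_one, sub_self]
  ring

theorem lt_add_mul_mul_exp_of_sub_le_integral {h a b r : ℝ} {y : ℝ → ℝ} (ha : 0 ≤ a)
    (hya : y 0 < a) (hb : 0 ≤ b) (hr : 0 ≤ r) (hy_cont : ContinuousOn y (Icc 0 h))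
    (hy_ineq : ∀ t ∈ Icc (0 : ℝ) h,
      y t - y 0 ≤ b * t + r ^ 2 * ∫ s in (0 : ℝ)..t, (t - s) * y s) :
    ∀ t ∈ Icc (0 : ℝ) h, y t < (a + b * t) * exp (r * t) := by
  refine forall_Icc_lt_of_forall_Ico_lt_imp hy_cont (by fun_prop) (by simpa using hya) ?_
  rintro t ⟨ht0, hth⟩ hbefore
  have hint : ∫ s in (0 : ℝ)..t, (t - s) * y s ≤
      (a + b * t) * ∫ s in (0 : ℝ)..t, (t - s) * exp (r * s) := by
    rw [← intervalIntegral.integral_const_mul]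
    refine integral_mono_on_of_le_Ioo ht0.le ?_
      (Continuous.intervalIntegrable (by fun_prop) _ _) fun s hs => ?_
    · exact ((continuousOn_const.sub continuousOn_id).mul (hy_cont.mono
        (Icc_subset_Icc_right hth))).intervalIntegrable_of_Icc ht0.le
    · calc (t - s) * y s ≤ (t - s) * ((a + b * s) * exp (r * s)) :=
            mul_le_mul_of_nonneg_left (hbefore s ⟨hs.1.le, hs.2⟩).le (by linarith [hs.2])
        _ = ((t - s) * exp (r * s)) * (a + b * s) := by ring
        _ ≤ ((t - s) * exp (r * s)) * (a + b * t) :=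
            mul_le_mul_of_nonneg_left (by gcongr; exact hs.2.le)
              (mul_nonneg (by linarith [hs.2]) (exp_pos _).le)
        _ = (a + b * t) * ((t - s) * exp (r * s)) := by ring
  have hrt : 0 ≤ (a + b * t) * (r * t) := by positivity
  calc y t ≤ y 0 + b * t + r ^ 2 * ((a + b * t) * ∫ s in (0 : ℝ)..t, (t - s) * exp (r * s)) := by
        linarith [hy_ineq t ⟨ht0.le, hth⟩, mul_le_mul_of_nonneg_left hint (sq_nonneg r)]
    _ = y 0 + b * t + (a + b * t) * (exp (r * t) - 1 - r * t) := by
        rw [mul_left_comm, sq_mul_integral_sub_mul_exp_mul]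
    _ < (a + b * t) * exp (r * t) := by linarith

theorem diff_compare_general (h b c : ℝ) (hb : 0 ≤ b) (hc : 0 ≤ c)
    (y : ℝ → ℝ) (hy_cont : ContinuousOn y (Set.Icc 0 h))
    (hy_nonneg : ∀ t ∈ Set.Icc (0 : ℝ) h, 0 ≤ y t)
    (hy_ineq : ∀ t ∈ Set.Icc (0 : ℝ) h,
      y t - y 0 ≤ b * t + c * ∫ s in (0 : ℝ)..t, (t - s) * y s) :
    ∀ t ∈ Set.Icc (0 : ℝ) h, y t ≤ (y 0 + b * t) * Real.exp (Real.sqrt c * t) := by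
  intro t ht
  have hy0 : 0 ≤ y 0 := hy_nonneg 0 ⟨le_rfl, ht.1.trans ht.2⟩
  rw [← sq_sqrt hc] at hy_ineq
  refine le_of_forall_pos_lt_add fun δ hδ => ?_
  have hE := exp_pos (√c * t)
  calc y t < (y 0 + δ / exp (√c * t) + b * t) * exp (√c * t) :=
        lt_add_mul_mul_exp_of_sub_le_integral (by positivity) (by simp [hδ, hE]) hb
          (sqrt_nonneg c) hy_cont hy_ineq t ht
    _ = (y 0 + b * t) * exp (√c * t) + δ := by field_simp; ring

/-- Differential comparison lemma: if a continuous nonnegative function `y` on `[0, h]`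
satisfies `y t - y 0 ≤ b t + c ∫₀ᵗ (t - s) y s ds`, then
`y t ≤ (y 0 + b t) exp(√c t)` on `[0, h]`. -/
theorem diff_compare (h b c : ℝ) (hh : 0 < h) (hb : 0 ≤ b) (hc : 0 ≤ c)
    (y : ℝ → ℝ) (hy_cont : ContinuousOn y (Set.Icc 0 h))
    (hy_nonneg : ∀ t ∈ Set.Icc (0 : ℝ) h, 0 ≤ y t)
    (hy_ineq : ∀ t ∈ Set.Icc (0 : ℝ) h,
      y t - y 0 ≤ b * t + c * ∫ s in (0 : ℝ)..t, (t - s) * y s) :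
    ∀ t ∈ Set.Icc (0 : ℝ) h, y t ≤ (y 0 + b * t) * Real.exp (Real.sqrt c * t) :=
  diff_compare_general h b c hb hc y hy_cont hy_nonneg hy_ineq
end

section
/- Cold-start initialization bound: suppose π ∝ exp(-V) on ℝ^d with 0 ≼ αI ≼ ∇²V ≼ βI everywhere and ∇V(0) = 0. Then the Gaussian μ₀ = N(0, β⁻¹ I) satisfies R_∞(μ₀ ‖ π) ≤ (d/2)·log(β/α), where R_∞(μ₀‖π) = log ess-sup (dμ₀/dπ). -/
/-!
Taylor's formula along the segment from the critical point `0` turns the Hessian bounds into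
`V 0 + α‖x‖²/2 ≤ V x ≤ V 0 + β‖x‖²/2`. The lower bound compares `exp (-V)` with a Gaussian of
variance `α⁻¹`, so `Z ≤ exp (-V 0) (2π/α)^{d/2}`; the upper bound gives
`exp (-β‖x‖²/2) ≤ exp (V 0) exp (-V x)`. Together the density of `N(0, β⁻¹I)` is at most
`(β/α)^{d/2}` times the density of `π` at every point, which bounds the essential supremum of
the Radon–Nikodym derivative.
-/

open MeasureTheory Real

theorem add_mul_sq_div_two_le_of_le_deriv2 {g g' g'' : ℝ → ℝ} {c t : ℝ}
    (hg : ∀ s, HasDerivAt g (g' s) s) (hg' : ∀ s, HasDerivAt g' (g'' s) s)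
    (hg'0 : g' 0 = 0) (hc : ∀ s, c ≤ g'' s) (ht : 0 ≤ t) :
    g 0 + c * t ^ 2 / 2 ≤ g t := by
  have hslope : ∀ s, 0 ≤ s → c * s ≤ g' s := by
    intro s hs
    have hmono : Monotone fun r => g' r - c * r :=
      monotone_of_hasDerivAt_nonneg (fun r => (hg' r).sub ((hasDerivAt_id r).const_mul c))
        fun r => by simpa using hc r
    simpa [hg'0] using hmono hs
  have hderiv : ∀ s, HasDerivAt (fun r => g r - c * r ^ 2 / 2) (g' s - c * s) s := fun s => by
    refine (hg s).sub ((((hasDerivAt_pow 2 s).const_mul c).div_const 2).congr_deriv ?_)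
    simp only [Nat.cast_ofNat, Nat.add_one_sub_one, pow_one]
    ring
  have hmono : MonotoneOn (fun r => g r - c * r ^ 2 / 2) (Set.Ici 0) := by
    refine monotoneOn_of_deriv_nonneg (convex_Ici 0)
      (HasDerivAt.continuousOn fun s _ => hderiv s)
      (fun s _ => (hderiv s).differentiableAt.differentiableWithinAt) fun s hs => ?_
    rw [interior_Ici] at hs
    rw [(hderiv s).deriv]
    linarith [hslope s hs.le]
  have := hmono Set.self_mem_Ici ht ht
  simp only [ne_eq, OfNat.ofNat_ne_zero, not_false_eq_true, zero_pow, mul_zero, zero_div,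
    sub_zero] at this
  linarith

section Hessian

variable {E : Type*} [NormedAddCommGroup E] [NormedSpace ℝ E] {V : E → ℝ} {c : ℝ}

theorem hasDerivAt_comp_smul (hV : Differentiable ℝ V) (x : E) (t : ℝ) :
    HasDerivAt (fun s : ℝ => V (s • x)) (fderiv ℝ V (t • x) x) t := by
  have hline : HasDerivAt (fun s : ℝ => s • x) x t := by
    simpa using (hasDerivAt_id t).smul_const x
  exact (hV (t • x)).hasFDerivAt.comp_hasDerivAt t hline

theorem hasDerivAt_fderiv_comp_smul (hV : ContDiff ℝ 2 V) (x : E) (t : ℝ) :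
    HasDerivAt (fun s : ℝ => fderiv ℝ V (s • x) x)
      (iteratedFDeriv ℝ 2 V (t • x) ![x, x]) t := by
  have hline : HasDerivAt (fun s : ℝ => s • x) x t := by
    simpa using (hasDerivAt_id t).smul_const x
  have hD : Differentiable ℝ (fderiv ℝ V) :=
    (hV.fderiv_right (m := 1) (by norm_num)).differentiable one_ne_zero
  have h := (hD (t • x)).hasFDerivAt.comp_hasDerivAt t hline
  replace h := h.clm_apply (hasDerivAt_const t x)
  rw [iteratedFDeriv_two_apply]
  simpa only [Function.comp_apply, Matrix.cons_val_zero, Matrix.cons_val_one, map_zero,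
    add_zero] using h

theorem add_mul_norm_sq_div_two_le_of_le_hessian (hV : ContDiff ℝ 2 V)
    (hc : ∀ x u, c * ‖u‖ ^ 2 ≤ iteratedFDeriv ℝ 2 V x ![u, u]) (h0 : fderiv ℝ V 0 = 0)
    (x : E) : V 0 + c * ‖x‖ ^ 2 / 2 ≤ V x := by
  have h := add_mul_sq_div_two_le_of_le_deriv2 (c := c * ‖x‖ ^ 2)
    (hasDerivAt_comp_smul (hV.differentiable two_ne_zero) x) (hasDerivAt_fderiv_comp_smul hV x)
    (by simp [h0]) (fun s => hc (s • x) x) zero_le_one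
  simpa using h

theorem le_add_mul_norm_sq_div_two_of_hessian_le (hV : ContDiff ℝ 2 V)
    (hc : ∀ x u, iteratedFDeriv ℝ 2 V x ![u, u] ≤ c * ‖u‖ ^ 2) (h0 : fderiv ℝ V 0 = 0)
    (x : E) : V x ≤ V 0 + c * ‖x‖ ^ 2 / 2 := by
  have h := add_mul_norm_sq_div_two_le_of_le_hessian (V := -V) (c := -c) hV.neg
    (fun y u => by simpa [iteratedFDeriv_neg_apply] using hc y u)
    (by simpa [fderiv_neg] using h0) x
  simp only [Pi.neg_apply] at h
  linarith

end Hessian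

section Gaussian

variable {E : Type*} [NormedAddCommGroup E] [InnerProductSpace ℝ E] [FiniteDimensional ℝ E]
  [MeasurableSpace E] [BorelSpace E]

theorem integrable_rexp_neg_mul_sq_norm {b : ℝ} (hb : 0 < b) :
    Integrable fun x : E => rexp (-b * ‖x‖ ^ 2) := by
  have h := (GaussianFourier.integrable_cexp_neg_mul_sq_norm_add (V := E) (b := (b : ℂ))
    (by simpa using hb) 0 0).norm
  refine h.congr (Filter.Eventually.of_forall fun x => ?_)
  simp only [inner_zero_left, Complex.ofReal_zero, mul_zero, add_zero, Complex.norm_exp]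
  norm_cast

theorem integral_exp_neg_le_of_quadratic_growth {V : E → ℝ} {α : ℝ} (hα : 0 < α)
    (hV : ∀ x, V 0 + α * ‖x‖ ^ 2 / 2 ≤ V x) :
    ∫ x, rexp (-V x) ≤ rexp (-V 0) * (2 * π / α) ^ (Module.finrank ℝ E / 2 : ℝ) :=
  calc ∫ x, rexp (-V x)
      ≤ ∫ x, rexp (-V 0) * rexp (-(α / 2) * ‖x‖ ^ 2) := by
        refine integral_mono_of_nonneg (Filter.Eventually.of_forall fun x => (exp_pos _).le)
          ((integrable_rexp_neg_mul_sq_norm (half_pos hα)).const_mul _)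
          (Filter.Eventually.of_forall fun x => ?_)
        dsimp only
        rw [← exp_add]
        exact exp_le_exp.mpr (by linarith [hV x])
    _ = rexp (-V 0) * (2 * π / α) ^ (Module.finrank ℝ E / 2 : ℝ) := by
        rw [integral_const_mul, GaussianFourier.integral_rexp_neg_mul_sq_norm (half_pos hα),
          div_div_eq_mul_div, mul_comm π 2]

end Gaussian

theorem gaussian_density_le_mul_gibbs_density {α β Z s v m q : ℝ} (hα : 0 < α) (hβ : 0 < β)
    (hZpos : 0 < Z) (hZ : Z ≤ rexp (-m) * (2 * π / α) ^ s) (hv : v ≤ m + β * q / 2) :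
    (β / (2 * π)) ^ s * rexp (-(β * q) / 2) ≤ (β / α) ^ s * (rexp (-v) / Z) := by
  have hA : 0 < (2 * π / α) ^ s := rpow_pos_of_pos (by positivity) s
  calc (β / (2 * π)) ^ s * rexp (-(β * q) / 2)
      ≤ (β / (2 * π)) ^ s * (rexp m * rexp (-v)) := by
        rw [← exp_add]
        gcongr
        linarith
    _ = (β / (2 * π)) ^ s * (2 * π / α) ^ s *
          (rexp (-v) / (rexp (-m) * (2 * π / α) ^ s)) := by
        rw [exp_neg m]
        field_simp
    _ ≤ (β / α) ^ s * (rexp (-v) / Z) := by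
        rw [← mul_rpow (by positivity) (by positivity), div_mul_div_comm, mul_comm β,
          mul_div_mul_left _ _ (by positivity)]
        gcongr

theorem essSup_rnDeriv_withDensity_ofReal_le {X : Type*} [MeasurableSpace X] {μ : Measure X}
    [SigmaFinite μ] {f g : X → ℝ} (hf : Measurable f) (hg : Measurable g)
    (hg_pos : ∀ x, 0 < g x) {C : ℝ} (hfg : ∀ x, f x ≤ C * g x) :
    essSup ((μ.withDensity fun x => ENNReal.ofReal (f x)).rnDeriv
        (μ.withDensity fun x => ENNReal.ofReal (g x)))
      (μ.withDensity fun x => ENNReal.ofReal (g x)) ≤ ENNReal.ofReal C := by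
  set ν := μ.withDensity fun x => ENNReal.ofReal (g x)
  have hratio : Measurable fun x => ENNReal.ofReal (f x / g x) :=
    (hf.div hg).ennreal_ofReal
  have hdensity : μ.withDensity (fun x => ENNReal.ofReal (f x)) =
      ν.withDensity fun x => ENNReal.ofReal (f x / g x) := by
    rw [← withDensity_mul μ hg.ennreal_ofReal hratio]
    congr 1
    funext x
    rw [Pi.mul_apply, ← ENNReal.ofReal_mul (hg_pos x).le, mul_div_cancel₀ _ (hg_pos x).ne']
  rw [hdensity, essSup_congr_ae (Measure.rnDeriv_withDensity ν hratio)]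
  refine essSup_le_of_ae_le _ (Filter.Eventually.of_forall fun x => ?_)
  exact ENNReal.ofReal_le_ofReal ((div_le_iff₀ (hg_pos x)).mpr (hfg x))

/-- Cold-start initialization bound: if `π ∝ exp(-V)` on `ℝ^d` with
`0 ≺ α I ≼ ∇²V ≼ β I` and `∇V(0) = 0`, then the Gaussian `μ₀ = N(0, β⁻¹ I)` satisfies
`R_∞(μ₀ ‖ π) ≤ (d/2) log(β/α)`, i.e. the essential supremum of `dμ₀/dπ` is at most
`(β/α)^{d/2}`. -/
theorem initialization_bound (d : ℕ) (V : EuclideanSpace ℝ (Fin d) → ℝ)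
    (α β : ℝ) (hα : 0 < α) (hαβ : α ≤ β)
    (hV : ContDiff ℝ 2 V)
    (hconv : ∀ x u : EuclideanSpace ℝ (Fin d),
      α * ‖u‖ ^ 2 ≤ iteratedFDeriv ℝ 2 V x ![u, u])
    (hsmooth : ∀ x u : EuclideanSpace ℝ (Fin d),
      iteratedFDeriv ℝ 2 V x ![u, u] ≤ β * ‖u‖ ^ 2)
    (hgrad : gradient V 0 = 0)
    (Z : ℝ) (hZ : Z = ∫ x, Real.exp (-V x)) (hZpos : 0 < Z)
    (pr μ₀ : Measure (EuclideanSpace ℝ (Fin d)))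
    (hπ : pr = volume.withDensity fun x => ENNReal.ofReal (Real.exp (-V x) / Z))
    (hμ₀ : μ₀ = volume.withDensity fun x =>
      ENNReal.ofReal ((β / (2 * Real.pi)) ^ ((d : ℝ) / 2)
        * Real.exp (-(β * ‖x‖ ^ 2) / 2))) :
    essSup (fun x => μ₀.rnDeriv pr x) pr ≤ ENNReal.ofReal ((β / α) ^ ((d : ℝ) / 2)) := by
  have hβ : 0 < β := hα.trans_le hαβ
  have hcrit : fderiv ℝ V 0 = 0 := by
    rw [← toDual_gradient, hgrad, map_zero]
  have hZle : Z ≤ rexp (-V 0) * (2 * π / α) ^ ((d : ℝ) / 2) := by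
    simpa [hZ, finrank_euclideanSpace_fin] using integral_exp_neg_le_of_quadratic_growth hα
      (add_mul_norm_sq_div_two_le_of_le_hessian hV hconv hcrit)
  have hgibbs : Measurable fun x => rexp (-V x) / Z :=
    hV.continuous.measurable.neg.exp.div_const Z
  subst hπ hμ₀
  refine essSup_rnDeriv_withDensity_ofReal_le (by fun_prop) hgibbs (fun x => by positivity)
    fun x => ?_
  exact gaussian_density_le_mul_gibbs_density hα hβ hZpos hZle
    (le_add_mul_norm_sq_div_two_of_hessian_le hV hsmooth hcrit x)
end

section
/- Score sub-Gaussianity: let π ∝ exp(-V) on ℝ^d with ∇V being β-Lipschitz. Then for every v ∈ ℝ^d, E_π[exp⟨∇V, v⟩] ≤ exp(β‖v‖²/2). Consequently, for any 0 < δ < 1/2, with probability at least 1-δ under π, ‖∇V‖² ≲ β·d + β·log(1/δ). -/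
/-!
By the descent lemma, `V (x - v) ≤ V x - ⟪∇V x, v⟫ + β‖v‖²/2`, so
`exp (-V x) * exp ⟪∇V x, v⟫ ≤ exp (β‖v‖²/2) * exp (-V (x - v))`; integrating in `x` and using
translation invariance of Lebesgue measure gives the moment generating function bound.
Averaging that bound against the Gaussian weight `exp (-β‖v‖²)` and evaluating the Gaussian
integrals gives `E_π exp (‖∇V‖² / (4β)) ≤ 2 ^ (d/2)`, and Markov's inequality then gives the tail.
-/

open MeasureTheory Real RealInnerProductSpace Set Module Function
open scoped Gradient

section Descent

variable {E : Type*} [NormedAddCommGroup E] [InnerProductSpace ℝ E] [CompleteSpace E]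
  {V : E → ℝ} {β : ℝ}

theorem le_add_inner_gradient_add_sq_norm (hV : Differentiable ℝ V)
    (hL : ∀ a b, ‖∇ V a - ∇ V b‖ ≤ β * ‖a - b‖) (x v : E) :
    V (x + v) ≤ V x + ⟪∇ V x, v⟫ + β * ‖v‖ ^ 2 / 2 := by
  set g : ℝ → ℝ := fun t => V (x + t • v) - t * ⟪∇ V x, v⟫ - β * ‖v‖ ^ 2 / 2 * t ^ 2
  have hg : ∀ t, HasDerivAt g (⟪∇ V (x + t • v), v⟫ - ⟪∇ V x, v⟫ - β * ‖v‖ ^ 2 * t) t := by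
    intro t
    have hline : HasDerivAt (fun s : ℝ => x + s • v) v t := by
      simpa using ((hasDerivAt_id t).smul_const v).const_add x
    have hVline := (hV (x + t • v)).hasGradientAt.hasFDerivAt.comp_hasDerivAt t hline
    rw [InnerProductSpace.toDual_apply_apply] at hVline
    refine ((hVline.sub ((hasDerivAt_id t).mul_const ⟪∇ V x, v⟫)).sub
      (((hasDerivAt_id t).pow 2).const_mul (β * ‖v‖ ^ 2 / 2))).congr_deriv ?_
    simp only [id, Nat.cast_ofNat]; ring
  have hg' : ∀ t ∈ interior (Ici (0 : ℝ)),
      ⟪∇ V (x + t • v), v⟫ - ⟪∇ V x, v⟫ - β * ‖v‖ ^ 2 * t ≤ 0 := by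
    intro t ht
    rw [interior_Ici, mem_Ioi] at ht
    rw [sub_nonpos]
    calc ⟪∇ V (x + t • v), v⟫ - ⟪∇ V x, v⟫ = ⟪∇ V (x + t • v) - ∇ V x, v⟫ :=
          (inner_sub_left _ _ _).symm
      _ ≤ ‖∇ V (x + t • v) - ∇ V x‖ * ‖v‖ := real_inner_le_norm _ _
      _ ≤ β * ‖x + t • v - x‖ * ‖v‖ := by gcongr; exact hL _ _
      _ = β * ‖v‖ ^ 2 * t := by
          rw [add_sub_cancel_left, norm_smul, norm_of_nonneg ht.le]; ring
  have hanti : AntitoneOn g (Ici 0) :=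
    antitoneOn_of_hasDerivWithinAt_nonpos (convex_Ici 0)
      (fun t _ => (hg t).continuousAt.continuousWithinAt)
      (fun t _ => (hg t).hasDerivWithinAt) hg'
  have := hanti self_mem_Ici (by norm_num : (1 : ℝ) ∈ Ici 0) zero_le_one
  simp only [g, zero_smul, one_smul, add_zero] at this
  linarith

theorem exp_neg_mul_exp_inner_gradient_le (hV : Differentiable ℝ V)
    (hL : ∀ a b, ‖∇ V a - ∇ V b‖ ≤ β * ‖a - b‖) (x v : E) :
    exp (-V x) * exp ⟪∇ V x, v⟫ ≤ exp (β * ‖v‖ ^ 2 / 2) * exp (-V (x - v)) := by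
  have := le_add_inner_gradient_add_sq_norm hV hL x (-v)
  rw [inner_neg_right, norm_neg, ← sub_eq_add_neg] at this
  rw [← exp_add, ← exp_add, exp_le_exp]
  linarith

variable [MeasurableSpace E] [BorelSpace E]

theorem lintegral_exp_neg_mul_exp_inner_gradient_le (μ : Measure E) [μ.IsAddRightInvariant]
    (hV : Differentiable ℝ V) (hL : ∀ a b, ‖∇ V a - ∇ V b‖ ≤ β * ‖a - b‖) (v : E) :
    ∫⁻ x, ENNReal.ofReal (exp (-V x) * exp ⟪∇ V x, v⟫) ∂μ
      ≤ ENNReal.ofReal (exp (β * ‖v‖ ^ 2 / 2)) * ∫⁻ x, ENNReal.ofReal (exp (-V x)) ∂μ :=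
  calc ∫⁻ x, ENNReal.ofReal (exp (-V x) * exp ⟪∇ V x, v⟫) ∂μ
      ≤ ∫⁻ x, ENNReal.ofReal (exp (β * ‖v‖ ^ 2 / 2)) * ENNReal.ofReal (exp (-V (x - v))) ∂μ :=
        lintegral_mono fun x => by
          rw [← ENNReal.ofReal_mul (exp_nonneg _)]
          exact ENNReal.ofReal_le_ofReal (exp_neg_mul_exp_inner_gradient_le hV hL x v)
    _ = ENNReal.ofReal (exp (β * ‖v‖ ^ 2 / 2)) * ∫⁻ x, ENNReal.ofReal (exp (-V x)) ∂μ := by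
        rw [lintegral_const_mul' _ _ ENNReal.ofReal_ne_top,
          lintegral_sub_right_eq_self (fun x => ENNReal.ofReal (exp (-V x))) v]

end Descent

section Gaussian

variable {E : Type*} [NormedAddCommGroup E] [InnerProductSpace ℝ E] [FiniteDimensional ℝ E]
  [MeasurableSpace E] [BorelSpace E]

theorem lintegral_exp_neg_mul_sq_norm_add_inner {b : ℝ} (hb : 0 < b) (w : E) :
    ∫⁻ g : E, ENNReal.ofReal (exp (-b * ‖g‖ ^ 2 + ⟪w, g⟫))
      = ENNReal.ofReal ((π / b) ^ ((finrank ℝ E : ℝ) / 2) * exp (‖w‖ ^ 2 / (4 * b))) := by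
  have hb' : 0 < (b : ℂ).re := by simpa using hb
  have hofReal : ∀ g : E, Complex.exp (-b * ‖g‖ ^ 2 + 1 * (⟪w, g⟫ : ℝ))
      = ((exp (-b * ‖g‖ ^ 2 + ⟪w, g⟫) : ℝ) : ℂ) := by
    intro g; push_cast; ring_nf
  have hint : Integrable fun g : E => exp (-b * ‖g‖ ^ 2 + ⟪w, g⟫) := by
    simpa only [hofReal, RCLike.re_to_complex, Complex.ofReal_re] using
      (GaussianFourier.integrable_cexp_neg_mul_sq_norm_add hb' 1 w).re
  have hval : ∫ g : E, exp (-b * ‖g‖ ^ 2 + ⟪w, g⟫)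
      = (π / b) ^ ((finrank ℝ E : ℝ) / 2) * exp (‖w‖ ^ 2 / (4 * b)) := by
    apply Complex.ofReal_injective
    rw [← integral_complex_ofReal]
    simp_rw [← hofReal]
    rw [GaussianFourier.integral_cexp_neg_mul_sq_norm_add hb' 1 w, Complex.ofReal_mul,
      Complex.ofReal_cpow (by positivity), Complex.ofReal_exp]
    push_cast
    ring_nf
  rw [← ofReal_integral_eq_lintegral_ofReal hint (ae_of_all _ fun _ => (exp_pos _).le), hval]

end Gaussian

section Subgaussian

variable {Ω E : Type*} [MeasurableSpace Ω] [NormedAddCommGroup E] [InnerProductSpace ℝ E]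
  {μ : Measure Ω} {X : Ω → E} {σ : ℝ}

/-- The moment generating function is a lower Lebesgue integral, so no integrability of
`exp ⟪X, v⟫` is presupposed. -/
def IsSubgaussianVector (X : Ω → E) (σ : ℝ) (μ : Measure Ω) : Prop :=
  ∀ v : E, ∫⁻ ω, ENNReal.ofReal (exp ⟪X ω, v⟫) ∂μ ≤ ENNReal.ofReal (exp (σ * ‖v‖ ^ 2 / 2))

theorem IsSubgaussianVector.integral_exp_inner_le [MeasurableSpace E] [BorelSpace E]
    (h : IsSubgaussianVector X σ μ) (hX : Measurable X) (v : E) :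
    ∫ ω, exp ⟪X ω, v⟫ ∂μ ≤ exp (σ * ‖v‖ ^ 2 / 2) := by
  rw [integral_eq_lintegral_of_nonneg_ae (ae_of_all _ fun _ => (exp_pos _).le)
    (by fun_prop : Measurable _).aestronglyMeasurable]
  exact ENNReal.toReal_le_of_le_ofReal (exp_pos _).le (h v)

variable [FiniteDimensional ℝ E] [MeasurableSpace E] [BorelSpace E]

theorem IsSubgaussianVector.lintegral_exp_sq_norm_le [SFinite μ] (h : IsSubgaussianVector X σ μ)
    (hX : Measurable X) (hσ : 0 < σ) :
    ∫⁻ ω, ENNReal.ofReal (exp (‖X ω‖ ^ 2 / (4 * σ))) ∂μ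
      ≤ ENNReal.ofReal (2 ^ ((finrank ℝ E : ℝ) / 2)) := by
  -- `c * exp (‖x‖² / (4σ))` is the Gaussian integral of `exp (-σ‖g‖² + ⟪x, g⟫)`: swap the
  -- integrals, apply `h` at each `g`, and evaluate the remaining Gaussian integral.
  set c := (π / σ) ^ ((finrank ℝ E : ℝ) / 2)
  have hc : 0 < c := by positivity
  have hgauss : ∀ ω, ENNReal.ofReal c * ENNReal.ofReal (exp (‖X ω‖ ^ 2 / (4 * σ)))
      = ∫⁻ g : E, ENNReal.ofReal (exp (-σ * ‖g‖ ^ 2)) * ENNReal.ofReal (exp ⟪X ω, g⟫) := by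
    intro ω
    rw [← ENNReal.ofReal_mul hc.le, ← lintegral_exp_neg_mul_sq_norm_add_inner hσ]
    refine lintegral_congr fun g => ?_
    rw [← ENNReal.ofReal_mul (exp_pos _).le, ← exp_add]
  have hmeas : AEMeasurable (uncurry fun ω (g : E) =>
      ENNReal.ofReal (exp (-σ * ‖g‖ ^ 2)) * ENNReal.ofReal (exp ⟪X ω, g⟫)) (μ.prod volume) := by
    fun_prop
  refine (ENNReal.mul_le_mul_iff_right (ENNReal.ofReal_pos.2 hc).ne' ENNReal.ofReal_ne_top).1 ?_
  calc ENNReal.ofReal c * ∫⁻ ω, ENNReal.ofReal (exp (‖X ω‖ ^ 2 / (4 * σ))) ∂μ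
      = ∫⁻ ω, (∫⁻ g : E,
          ENNReal.ofReal (exp (-σ * ‖g‖ ^ 2)) * ENNReal.ofReal (exp ⟪X ω, g⟫)) ∂μ := by
        rw [← lintegral_const_mul' _ _ ENNReal.ofReal_ne_top]
        simp_rw [hgauss]
    _ = ∫⁻ g : E, ∫⁻ ω, ENNReal.ofReal (exp (-σ * ‖g‖ ^ 2)) * ENNReal.ofReal (exp ⟪X ω, g⟫) ∂μ :=
        lintegral_lintegral_swap hmeas
    _ = ∫⁻ g : E, ENNReal.ofReal (exp (-σ * ‖g‖ ^ 2)) * ∫⁻ ω, ENNReal.ofReal (exp ⟪X ω, g⟫) ∂μ := by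
        simp_rw [lintegral_const_mul' _ _ ENNReal.ofReal_ne_top]
    _ ≤ ∫⁻ g : E, ENNReal.ofReal (exp (-σ * ‖g‖ ^ 2)) * ENNReal.ofReal (exp (σ * ‖g‖ ^ 2 / 2)) := by
        gcongr with g
        exact h g
    _ = ∫⁻ g : E, ENNReal.ofReal (exp (-(σ / 2) * ‖g‖ ^ 2 + ⟪(0 : E), g⟫)) :=
        lintegral_congr fun g => by
          rw [← ENNReal.ofReal_mul (exp_pos _).le, ← exp_add, inner_zero_left]
          ring_nf
    _ = ENNReal.ofReal c * ENNReal.ofReal (2 ^ ((finrank ℝ E : ℝ) / 2)) := by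
        rw [lintegral_exp_neg_mul_sq_norm_add_inner (half_pos hσ), ← ENNReal.ofReal_mul hc.le,
          norm_zero, div_div_eq_mul_div, mul_div_right_comm, mul_rpow (by positivity) zero_le_two]
        simp [c]

theorem two_rpow_half_div_exp_le {n δ : ℝ} (hn : 0 ≤ n) (hδ : 0 < δ) (hδ1 : δ ≤ 1) :
    2 ^ (n / 2) / exp (2 * n + 2 * log (1 / δ)) ≤ δ := by
  have hlogδ : log δ ≤ 0 := log_nonpos hδ.le hδ1
  have hlog2 : log 2 < 1 := by linarith [log_two_lt_d9]
  calc 2 ^ (n / 2) / exp (2 * n + 2 * log (1 / δ))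
      = exp (log 2 * (n / 2) - 2 * n + 2 * log δ) := by
        rw [rpow_def_of_pos two_pos, ← exp_sub, one_div, log_inv]; ring_nf
    _ ≤ exp (log δ) := exp_le_exp.2 (by nlinarith)
    _ = δ := exp_log hδ

theorem IsSubgaussianVector.ofReal_one_sub_le_measure_sq_norm_le [IsProbabilityMeasure μ]
    (h : IsSubgaussianVector X σ μ) (hX : Measurable X) (hσ : 0 < σ) {δ : ℝ} (hδ : 0 < δ) :
    ENNReal.ofReal (1 - δ)
      ≤ μ {ω | ‖X ω‖ ^ 2 ≤ 8 * (σ * finrank ℝ E + σ * log (1 / δ))} := by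
  rcases le_or_gt 1 δ with hδ1 | hδ1
  · simp [ENNReal.ofReal_of_nonpos (sub_nonpos.2 hδ1)]
  set t := 8 * (σ * finrank ℝ E + σ * log (1 / δ))
  have ht : t / (4 * σ) = 2 * finrank ℝ E + 2 * log (1 / δ) := by
    field_simp; ring
  have htail : μ {ω | ‖X ω‖ ^ 2 ≤ t}ᶜ ≤ ENNReal.ofReal δ :=
    calc μ {ω | ‖X ω‖ ^ 2 ≤ t}ᶜ
        ≤ μ {ω | ENNReal.ofReal (exp (t / (4 * σ)))
            ≤ ENNReal.ofReal (exp (‖X ω‖ ^ 2 / (4 * σ)))} := by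
          refine measure_mono fun ω hω => ?_
          simp only [mem_compl_iff, mem_ofPred_eq, not_le] at hω ⊢
          gcongr
      _ ≤ (∫⁻ ω, ENNReal.ofReal (exp (‖X ω‖ ^ 2 / (4 * σ))) ∂μ)
            / ENNReal.ofReal (exp (t / (4 * σ))) :=
          meas_ge_le_lintegral_div (by fun_prop) (ENNReal.ofReal_pos.2 (exp_pos _)).ne'
            ENNReal.ofReal_ne_top
      _ ≤ ENNReal.ofReal (2 ^ ((finrank ℝ E : ℝ) / 2)) / ENNReal.ofReal (exp (t / (4 * σ))) := by
          gcongr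
          exact h.lintegral_exp_sq_norm_le hX hσ
      _ ≤ ENNReal.ofReal δ := by
          rw [← ENNReal.ofReal_div_of_pos (exp_pos _), ht]
          exact ENNReal.ofReal_le_ofReal
            (two_rpow_half_div_exp_le (Nat.cast_nonneg _) hδ hδ1.le)
  rw [prob_compl_eq_one_sub (measurableSet_le (by fun_prop) measurable_const)] at htail
  rw [ENNReal.ofReal_sub _ hδ.le, ENNReal.ofReal_one]
  exact tsub_le_iff_tsub_le.mp htail

end Subgaussian

section Gibbs

variable {E : Type*} [NormedAddCommGroup E] [MeasurableSpace E]

/-- If `exp (-V)` is not `μ`-integrable, the normalising integral is the junk value `0`, and so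
is this measure. -/
noncomputable def gibbsMeasure (μ : Measure E) (V : E → ℝ) : Measure E :=
  μ.withDensity fun x => ENNReal.ofReal (exp (-V x) / ∫ y, exp (-V y) ∂μ)

variable [InnerProductSpace ℝ E] [CompleteSpace E] [BorelSpace E] {V : E → ℝ} {β : ℝ}

theorem isSubgaussianVector_gradient_gibbsMeasure (μ : Measure E) [μ.IsAddRightInvariant]
    (hV : Differentiable ℝ V) (hL : ∀ a b, ‖∇ V a - ∇ V b‖ ≤ β * ‖a - b‖)
    (hZ : 0 < ∫ x, exp (-V x) ∂μ) :
    IsSubgaussianVector (∇ V) β (gibbsMeasure μ V) := by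
  intro v
  set Z := ∫ x, exp (-V x) ∂μ
  have hint : Integrable (fun x => exp (-V x)) μ := by
    by_contra h
    exact hZ.ne' (integral_undef h)
  have hdens : Measurable fun x => ENNReal.ofReal (exp (-V x) / Z) := by
    have := hV.continuous.measurable
    fun_prop
  rw [gibbsMeasure, lintegral_withDensity_eq_lintegral_mul_non_measurable _ hdens
    (ae_of_all _ fun _ => ENNReal.ofReal_lt_top)]
  calc ∫⁻ x, ENNReal.ofReal (exp (-V x) / Z) * ENNReal.ofReal (exp ⟪∇ V x, v⟫) ∂μ
      = ENNReal.ofReal Z⁻¹ * ∫⁻ x, ENNReal.ofReal (exp (-V x) * exp ⟪∇ V x, v⟫) ∂μ := by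
        rw [← lintegral_const_mul' _ _ ENNReal.ofReal_ne_top]
        refine lintegral_congr fun x => ?_
        rw [← ENNReal.ofReal_mul (by positivity), ← ENNReal.ofReal_mul (by positivity)]
        ring_nf
    _ ≤ ENNReal.ofReal Z⁻¹ *
          (ENNReal.ofReal (exp (β * ‖v‖ ^ 2 / 2)) * ∫⁻ x, ENNReal.ofReal (exp (-V x)) ∂μ) := by
        gcongr
        exact lintegral_exp_neg_mul_exp_inner_gradient_le μ hV hL v
    _ = ENNReal.ofReal (exp (β * ‖v‖ ^ 2 / 2)) := by
        rw [← ofReal_integral_eq_lintegral_ofReal hint (ae_of_all _ fun _ => (exp_pos _).le),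
          mul_left_comm, ← ENNReal.ofReal_mul (inv_nonneg.2 hZ.le), inv_mul_cancel₀ hZ.ne',
          ENNReal.ofReal_one, mul_one]

end Gibbs

/-- Score sub-Gaussianity: if `π ∝ exp(-V)` on `ℝ^d` with `β`-Lipschitz gradient `∇V`,
then `E_π exp⟨∇V, v⟩ ≤ exp(β ‖v‖² / 2)` for all `v`, and consequently there is a
universal constant `C` such that for all `0 < δ < 1/2`, with `π`-probability at least
`1 - δ` one has `‖∇V‖² ≤ C (β d + β log(1/δ))`. -/
theorem score_subgaussian :
    ∃ C : ℝ, 0 < C ∧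
      ∀ (d : ℕ) (V : EuclideanSpace ℝ (Fin d) → ℝ) (β : ℝ), 0 < β →
        ContDiff ℝ 1 V →
        (∀ a b : EuclideanSpace ℝ (Fin d),
          ‖gradient V a - gradient V b‖ ≤ β * ‖a - b‖) →
        ∀ (Z : ℝ), Z = (∫ x, Real.exp (-V x)) → 0 < Z →
        ∀ pr : Measure (EuclideanSpace ℝ (Fin d)),
          pr = (volume.withDensity fun x => ENNReal.ofReal (Real.exp (-V x) / Z)) →
          IsProbabilityMeasure pr →
          (∀ v : EuclideanSpace ℝ (Fin d),
            (∫ x, Real.exp (inner ℝ (gradient V x) v) ∂pr) ≤ Real.exp (β * ‖v‖ ^ 2 / 2))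
          ∧ ∀ δ : ℝ, 0 < δ → δ < 1 / 2 →
              ENNReal.ofReal (1 - δ)
                ≤ pr {x | ‖gradient V x‖ ^ 2 ≤ C * (β * d + β * Real.log (1 / δ))} := by
  refine ⟨8, by norm_num, fun d V β hβ hV hL Z hZ hZpos pr hpr hprob => ?_⟩
  subst hZ hpr
  have hgrad : Measurable (∇ V) :=
    ((InnerProductSpace.toDual ℝ _).symm.continuous.comp
      (hV.continuous_fderiv one_ne_zero)).measurable
  have hsub : IsSubgaussianVector (∇ V) β (gibbsMeasure volume V) :=
    isSubgaussianVector_gradient_gibbsMeasure volume (hV.differentiable one_ne_zero) hL hZpos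
  have : IsProbabilityMeasure (gibbsMeasure volume V) := hprob
  refine ⟨hsub.integral_exp_inner_le hgrad, fun δ hδ _ => ?_⟩
  have := hsub.ofReal_one_sub_le_measure_sq_norm_le hgrad hβ hδ
  rwa [finrank_euclideanSpace_fin] at this
end

section
/- Hamiltonian flow growth bound: assume -βI ≼ ∇²V ≼ βI and let (x_t, p_t) solve the Hamiltonian ODE ẋ_t = p_t, ṗ_t = -∇V(x_t). If h ≲ β^{-1/2} (sufficiently small multiple), then sup_{t∈[0,h]} ‖p_t‖ ≲ ‖p₀‖ + h·‖∇V(x₀)‖ and sup_{t∈[0,h]} ‖∇V(x_t)‖ ≲ ‖∇V(x₀)‖ + β·h·‖p₀‖. -/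
/-!
Let `A` and `G` be the maxima of `‖p_t‖` and `‖∇V(x_t)‖` on `[0, h]`. Integrating the equations of
motion gives `A ≤ ‖p₀‖ + h G` and, by the Lipschitz bound on `∇V`, `G ≤ ‖∇V(x₀)‖ + β h A`.
Substituting each inequality into the other yields `A ≤ ‖p₀‖ + h ‖∇V(x₀)‖ + β h² A` and
`G ≤ ‖∇V(x₀)‖ + β h ‖p₀‖ + β h² G`, and `β h² ≤ 1/2` lets both error terms be absorbed.
-/

open Real Set

lemma le_two_mul_of_le_add_mul {A a ε : ℝ} (hA : A ≤ a + ε * A) (hε : ε ≤ 1 / 2) (hA₀ : 0 ≤ A) :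
    A ≤ 2 * a := by
  nlinarith

lemma le_two_mul_of_coupled_le {A G a g β h : ℝ} (hA : A ≤ a + G * h) (hG : G ≤ g + β * (A * h))
    (hβ : 0 ≤ β) (hh : 0 ≤ h) (hsmall : β * h ^ 2 ≤ 1 / 2) (hA₀ : 0 ≤ A) (hG₀ : 0 ≤ G) :
    A ≤ 2 * (a + h * g) ∧ G ≤ 2 * (g + β * h * a) := by
  constructor
  · refine le_two_mul_of_le_add_mul ?_ hsmall hA₀
    nlinarith [mul_le_mul_of_nonneg_right hG hh]
  · refine le_two_mul_of_le_add_mul ?_ hsmall hG₀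
    nlinarith [mul_le_mul_of_nonneg_left hA (mul_nonneg hβ hh)]

section

variable {E : Type*} [NormedAddCommGroup E] [NormedSpace ℝ E]

lemma norm_sub_le_mul_of_hasDerivAt_Icc {f f' : ℝ → E} {M h : ℝ}
    (hf : ∀ t ∈ Icc 0 h, HasDerivAt f (f' t) t) (hM : ∀ t ∈ Icc 0 h, ‖f' t‖ ≤ M) :
    ∀ t ∈ Icc 0 h, ‖f t - f 0‖ ≤ M * h := by
  intro t ht
  have hM₀ : 0 ≤ M := (norm_nonneg _).trans (hM 0 ⟨le_rfl, ht.1.trans ht.2⟩)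
  calc ‖f t - f 0‖ ≤ M * (t - 0) :=
        norm_image_sub_le_of_norm_deriv_le_segment' (fun s hs => (hf s hs).hasDerivWithinAt)
          (fun s hs => hM s (Ico_subset_Icc_self hs)) t ht
    _ ≤ M * h := by gcongr; linarith [ht.2]

theorem hamiltonian_flow_norm_le {g : E → E} {K : NNReal} (hg : LipschitzWith K g) {h : ℝ}
    (hh : 0 ≤ h) (hsmall : K * h ^ 2 ≤ 1 / 2) {x p : ℝ → E}
    (hx : ∀ t ∈ Icc 0 h, HasDerivAt x (p t) t) (hp : ∀ t ∈ Icc 0 h, HasDerivAt p (-g (x t)) t) :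
    (∀ t ∈ Icc 0 h, ‖p t‖ ≤ 2 * (‖p 0‖ + h * ‖g (x 0)‖)) ∧
      ∀ t ∈ Icc 0 h, ‖g (x t)‖ ≤ 2 * (‖g (x 0)‖ + K * h * ‖p 0‖) := by
  have h₀ : (0 : ℝ) ∈ Icc 0 h := ⟨le_rfl, hh⟩
  have hxc : ContinuousOn x (Icc 0 h) := fun t ht => (hx t ht).continuousAt.continuousWithinAt
  have hpc : ContinuousOn p (Icc 0 h) := fun t ht => (hp t ht).continuousAt.continuousWithinAt
  obtain ⟨ta, hta, hpmax⟩ := isCompact_Icc.exists_isMaxOn ⟨0, h₀⟩ hpc.norm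
  obtain ⟨tg, htg, hgmax⟩ :=
    isCompact_Icc.exists_isMaxOn ⟨0, h₀⟩ (hg.continuous.comp_continuousOn hxc).norm
  have hA : ‖p ta‖ ≤ ‖p 0‖ + ‖g (x tg)‖ * h :=
    calc ‖p ta‖ ≤ ‖p 0‖ + ‖p ta - p 0‖ := norm_le_insert' _ _
      _ ≤ ‖p 0‖ + ‖g (x tg)‖ * h := by
        gcongr
        exact norm_sub_le_mul_of_hasDerivAt_Icc hp (fun s hs => (norm_neg _).trans_le (hgmax hs))
          ta hta
  have hG : ‖g (x tg)‖ ≤ ‖g (x 0)‖ + K * (‖p ta‖ * h) :=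
    calc ‖g (x tg)‖ ≤ ‖g (x 0)‖ + ‖g (x tg) - g (x 0)‖ := norm_le_insert' _ _
      _ ≤ ‖g (x 0)‖ + K * ‖x tg - x 0‖ := by gcongr; exact hg.norm_sub_le _ _
      _ ≤ ‖g (x 0)‖ + K * (‖p ta‖ * h) := by
        gcongr
        exact norm_sub_le_mul_of_hasDerivAt_Icc hx (fun s hs => hpmax hs) tg htg
  obtain ⟨hAle, hGle⟩ :=
    le_two_mul_of_coupled_le hA hG K.2 hh hsmall (norm_nonneg _) (norm_nonneg _)
  exact ⟨fun t ht => (hpmax ht).trans hAle, fun t ht => (hgmax ht).trans hGle⟩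

end

/-- Hamiltonian flow growth bound: if `‖∇²V‖_op ≤ β` (equivalently, `∇V` is
`β`-Lipschitz) and `(x_t, p_t)` solves `ẋ = p`, `ṗ = -∇V(x)`, then for `h` a
sufficiently small multiple of `β^{-1/2}`,
`sup_{t ∈ [0,h]} ‖p_t‖ ≲ ‖p₀‖ + h ‖∇V(x₀)‖` and
`sup_{t ∈ [0,h]} ‖∇V(x_t)‖ ≲ ‖∇V(x₀)‖ + β h ‖p₀‖`. -/
theorem hamiltonian_flow_growth :
    ∃ c C : ℝ, 0 < c ∧ 0 < C ∧
      ∀ (d : ℕ) (V : EuclideanSpace ℝ (Fin d) → ℝ) (β : ℝ), 0 < β →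
        ContDiff ℝ 2 V →
        (∀ a b : EuclideanSpace ℝ (Fin d),
          ‖gradient V a - gradient V b‖ ≤ β * ‖a - b‖) →
        ∀ (h : ℝ), 0 ≤ h → h * Real.sqrt β ≤ c →
          ∀ x p : ℝ → EuclideanSpace ℝ (Fin d),
            (∀ t ∈ Set.Icc (0 : ℝ) h, HasDerivAt x (p t) t) →
            (∀ t ∈ Set.Icc (0 : ℝ) h, HasDerivAt p (-(gradient V (x t))) t) →
            (∀ t ∈ Set.Icc (0 : ℝ) h,
                ‖p t‖ ≤ C * (‖p 0‖ + h * ‖gradient V (x 0)‖))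
              ∧ ∀ t ∈ Set.Icc (0 : ℝ) h,
                  ‖gradient V (x t)‖
                    ≤ C * (‖gradient V (x 0)‖ + β * h * ‖p 0‖) := by
  refine ⟨1 / 2, 2, by norm_num, by norm_num, ?_⟩
  intro d V β hβ _ hLip h hh hhc x p hx hp
  have hK : (β.toNNReal : ℝ) = β := Real.coe_toNNReal β hβ.le
  have hgrad : LipschitzWith β.toNNReal (gradient V) :=
    LipschitzWith.of_dist_le_mul fun a b => by simpa only [dist_eq_norm, hK] using hLip a b
  have hsmall : (β.toNNReal : ℝ) * h ^ 2 ≤ 1 / 2 :=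
    calc (β.toNNReal : ℝ) * h ^ 2 = (h * √β) ^ 2 := by rw [hK, mul_pow, sq_sqrt hβ.le, mul_comm]
      _ ≤ (1 / 2) ^ 2 := by gcongr
      _ ≤ 1 / 2 := by norm_num
  simpa only [hK] using hamiltonian_flow_norm_le hgrad hh hsmall hx hp
end
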